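/- Let N = 2n+1 be odd with n ≥ 1, let R = N + 2, and let λ : Fin R → ℝ be non-increasing with λ₁ = 1, λ_{2k} = λ_{2k+1} ≥ 0 for k = 1, …, (N+1)/2, and ∑_k λ k = N. Then there exists an alternating x : (Fin N → Fin R) → ℂ with ∑_f |x f|² = N! whose one-particle reduced density matrix γ (with entries γ a b = (1/(N−1)!) ∑_{j : Fin (N−1) → Fin R} x (a ::ᵥ j) * conj (x (b ::ᵥ j))) is the diagonal matrix with diagonal entries λ₁, …, λ_R. -/

import Mathlib

/-!
Take the real superposition `ψ = ∑ₖ √wₖ Φₖ`, `wₖ = 1 - λ_{2k+1}`, of the `n + 1` Slater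
determinants `Φₖ` that occupy every orbital except the `k`-th pair `{2k+1, 2k+2}` (orbitals
indexed from `0`). Any two of these determinants differ in two orbitals, so after removing one
particle they still cannot overlap: all cross terms drop out of the norm and of the one-particle
density matrix. Hence `γ` is diagonal with `γ a a = ∑ₖ wₖ [a occupied in Φₖ]`. Orbital `0` is
occupied in every `Φₖ` and gets `∑ₖ wₖ = 1` (this is the trace condition), while an orbital of
pair `j` gets `1 - wⱼ = λ_{2j+1}`. Monotonicity gives `λ_{2k+1} ≤ λ₀ = 1`, so the weights are
nonnegative.
-/

open Equiv Finset

namespace Slater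

variable {ι : Type*} {M : ℕ}

theorem eq_zero_of_not_injective_of_alternating {x : (Fin M → ι) → ℝ}
    (hx : ∀ (σ : Perm (Fin M)) f, x (f ∘ σ) = Perm.sign σ * x f) {f : Fin M → ι}
    (hf : ¬ Function.Injective f) : x f = 0 := by
  obtain ⟨i, j, hij, hne⟩ := Function.not_injective_iff.mp hf
  have hswap : f ∘ swap i j = f := by
    funext k
    rcases eq_or_ne k i with rfl | hki
    · simp [hij]
    rcases eq_or_ne k j with rfl | hkj
    · simp [hij]
    · simp [swap_apply_of_ne_of_ne hki hkj]
  have := hx (swap i j) f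
  rw [hswap, Perm.sign_swap hne] at this
  push_cast at this
  linarith

variable [DecidableEq ι]

-- The wavefunction of the Slater determinant `e 0 ∧ ⋯ ∧ e (M - 1)`.
noncomputable def slater (e f : Fin M → ι) : ℝ :=
  ∑ σ : Perm (Fin M), if f = e ∘ σ then (Perm.sign σ : ℝ) else 0

theorem sum_mul_slater [Fintype ι] (g : (Fin M → ι) → ℝ) (e : Fin M → ι) :
    ∑ f, g f * slater e f = ∑ σ : Perm (Fin M), Perm.sign σ * g (e ∘ σ) := by
  simp only [slater, mul_sum, mul_ite, mul_zero]
  rw [sum_comm]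
  refine sum_congr rfl fun σ _ => ?_
  rw [sum_ite_eq' univ (e ∘ σ), if_pos (mem_univ _), mul_comm]

theorem slater_comp_perm (e f : Fin M → ι) (τ : Perm (Fin M)) :
    slater e (f ∘ τ) = Perm.sign τ * slater e f := by
  simp only [slater, mul_sum, mul_ite, mul_zero]
  refine (Fintype.sum_equiv (Equiv.mulRight τ) _ _ fun σ => ?_).symm
  have hcomp : f ∘ τ = e ∘ (σ * τ : Perm (Fin M)) ↔ f = e ∘ σ :=
    τ.surjective.injective_comp_right.eq_iff (b := e ∘ σ)
  simp only [coe_mulRight, hcomp, Perm.sign_mul, Units.val_mul, Int.cast_mul, mul_comm]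

theorem sign_mul_sign_self {α : Type*} [Fintype α] [DecidableEq α] (σ : Perm α) :
    (Perm.sign σ : ℝ) * Perm.sign σ = 1 := by
  rw [← Int.cast_mul, ← Units.val_mul, Int.units_mul_self, Units.val_one, Int.cast_one]

theorem slater_self {e : Fin M → ι} (he : Function.Injective e) : slater e e = 1 := by
  rw [slater, sum_eq_single 1]
  · simp
  · intro σ _ hσ
    rw [if_neg]
    intro h
    exact hσ (Equiv.ext fun i => (he (congrFun h i)).symm)
  · simp

theorem slater_eq_zero_of_range_ne {e f : Fin M → ι} (h : Set.range f ≠ Set.range e) :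
    slater e f = 0 := by
  refine sum_eq_zero fun σ _ => if_neg ?_
  rintro rfl
  exact h (EquivLike.range_comp e σ)

theorem sum_slater_mul_slater [Fintype ι] (e e' : Fin M → ι) :
    ∑ f, slater e' f * slater e f = M.factorial * slater e' e := by
  simp only [sum_mul_slater, slater_comp_perm, ← mul_assoc, sign_mul_sign_self, one_mul, sum_const,
    card_univ, Fintype.card_perm, Fintype.card_fin, nsmul_eq_mul]

theorem card_perm_apply_zero_eq (i : Fin (M + 1)) :
    #{σ : Perm (Fin (M + 1)) | σ 0 = i} = M.factorial := by
  rw [card_filter, ← Fintype.sum_equiv Perm.decomposeFin.symm (fun x => if x.1 = i then 1 else 0)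
    _ fun x => by rw [Perm.decomposeFin_symm_apply_zero], Fintype.sum_prod_type, sum_eq_single i]
  · simp [Fintype.card_perm]
  · intro p _ hp
    simp [hp]
  · simp

theorem sum_slater_cons_mul [Fintype ι] (e : Fin (M + 1) → ι) (a : ι) (g : (Fin M → ι) → ℝ) :
    ∑ j, slater e (Fin.cons a j) * g j =
      ∑ σ : Perm (Fin (M + 1)), if e (σ 0) = a then Perm.sign σ * g (Fin.tail (e ∘ σ)) else 0 := by
  simp only [slater, sum_mul, ite_mul, zero_mul]
  rw [sum_comm]
  refine sum_congr rfl fun σ _ => ?_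
  have hcons : ∀ j, Fin.cons a j = e ∘ σ ↔ e (σ 0) = a ∧ j = Fin.tail (e ∘ σ) := fun j => by
    conv_lhs => rw [← Fin.cons_self_tail (e ∘ σ)]
    rw [Fin.cons_inj, Function.comp_apply, eq_comm (a := a)]
  by_cases ha : e (σ 0) = a
  · simp only [hcons, ha, true_and, sum_ite_eq', mem_univ, if_true]
  · simp only [hcons, ha, false_and, if_false, sum_const_zero]

theorem sum_slater_cons_mul_slater_cons_self [Fintype ι] {e : Fin (M + 1) → ι}
    (he : Function.Injective e) (a b : ι) :
    ∑ j, slater e (Fin.cons a j) * slater e (Fin.cons b j) =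
      if a = b ∧ a ∈ Set.range e then (M.factorial : ℝ) else 0 := by
  have hterm : ∀ σ : Perm (Fin (M + 1)), e (σ 0) = a →
      slater e (Fin.cons b (Fin.tail (e ∘ σ))) = if a = b then (Perm.sign σ : ℝ) else 0 := by
    intro σ ha
    split_ifs with hab
    · subst ha hab
      rw [show e (σ 0) = (e ∘ σ) 0 from rfl, Fin.cons_self_tail, slater_comp_perm, slater_self he,
        mul_one]
    · refine slater_eq_zero_of_range_ne fun hrange => ?_
      have : a ∈ Set.range (Fin.cons b (Fin.tail (e ∘ σ)) : Fin (M + 1) → ι) := hrange ▸ ⟨_, ha⟩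
      rw [Fin.range_cons] at this
      rcases this with hb | ⟨k, hk⟩
      · exact hab hb
      · exact Fin.succ_ne_zero k (σ.injective (he (hk.trans ha.symm)))
  calc ∑ j, slater e (Fin.cons a j) * slater e (Fin.cons b j)
      = ∑ σ : Perm (Fin (M + 1)), if a = b ∧ e (σ 0) = a then (1 : ℝ) else 0 := by
        rw [sum_slater_cons_mul]
        refine sum_congr rfl fun σ _ => ?_
        by_cases ha : e (σ 0) = a
        · rw [if_pos ha, hterm σ ha]
          split_ifs <;> simp_all [sign_mul_sign_self]
        · simp [ha]
    _ = if a = b ∧ a ∈ Set.range e then (M.factorial : ℝ) else 0 := by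
        by_cases hab : a = b
        · subst hab
          simp only [true_and, sum_boole]
          by_cases ha : a ∈ Set.range e
          · obtain ⟨i, rfl⟩ := ha
            simp only [he.eq_iff, card_perm_apply_zero_eq, Set.mem_range_self, if_true]
          · rw [if_neg ha, filter_false_of_mem fun σ _ h => ha ⟨_, h⟩, card_empty, Nat.cast_zero]
        · simp [hab]

theorem sum_slater_cons_mul_slater_cons_eq_zero [Fintype ι] {e e' : Fin (M + 1) → ι}
    (h : (Set.range e \ Set.range e').Nontrivial) (a b : ι) :
    ∑ j, slater e (Fin.cons a j) * slater e' (Fin.cons b j) = 0 := by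
  rw [sum_slater_cons_mul]
  refine sum_eq_zero fun σ _ => ?_
  split_ifs with ha
  · obtain ⟨t, ⟨⟨i, rfl⟩, ht'⟩, hta⟩ := h.exists_ne a
    rw [slater_eq_zero_of_range_ne, mul_zero]
    refine fun hrange => ht' (hrange ▸ ?_)
    rcases Fin.eq_zero_or_eq_succ (σ.symm i) with h0 | ⟨k, hk⟩
    · exact absurd (by rw [← ha, ← h0, Equiv.apply_symm_apply]) hta
    · exact ⟨k.succ, by
        rw [Fin.cons_succ, Fin.tail, Function.comp_apply, ← hk, Equiv.apply_symm_apply]⟩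
  · rfl

variable {K : Type*} [Fintype K]

theorem sum_sum_mul_sum_of_orthogonal {α : Type*} [Fintype α] (c : K → ℝ) (A B : K → α → ℝ)
    (h : ∀ k k', k ≠ k' → ∑ x, A k x * B k' x = 0) :
    ∑ x, (∑ k, c k * A k x) * (∑ k, c k * B k x) = ∑ k, c k ^ 2 * ∑ x, A k x * B k x := by
  simp only [sum_mul_sum]
  rw [sum_comm]
  refine sum_congr rfl fun k _ => ?_
  rw [sum_comm, sum_eq_single k]
  · rw [mul_sum]
    exact sum_congr rfl fun x _ => by ring
  · intro k' _ hk'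
    calc ∑ x, c k * A k x * (c k' * B k' x) = c k * c k' * ∑ x, A k x * B k' x := by
          rw [mul_sum]
          exact sum_congr rfl fun x _ => by ring
      _ = 0 := by rw [h k k' hk'.symm, mul_zero]
  · simp

noncomputable def slaterSum (c : K → ℝ) (e : K → Fin M → ι) (f : Fin M → ι) : ℝ :=
  ∑ k, c k * slater (e k) f

theorem slaterSum_comp_perm (c : K → ℝ) (e : K → Fin M → ι) (f : Fin M → ι) (τ : Perm (Fin M)) :
    slaterSum c e (f ∘ τ) = Perm.sign τ * slaterSum c e f := by
  simp only [slaterSum, slater_comp_perm, mul_sum]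
  exact sum_congr rfl fun k _ => by ring

theorem sum_slaterSum_sq [Fintype ι] (c : K → ℝ) {e : K → Fin M → ι}
    (he : ∀ k, Function.Injective (e k))
    (hrange : Pairwise fun k k' => Set.range (e k) ≠ Set.range (e k')) :
    ∑ f, slaterSum c e f ^ 2 = M.factorial * ∑ k, c k ^ 2 := by
  simp only [sq, slaterSum]
  rw [sum_sum_mul_sum_of_orthogonal c (fun k => slater (e k)) (fun k => slater (e k))]
  · simp only [sum_slater_mul_slater, slater_self (he _), mul_sum]
    exact sum_congr rfl fun k _ => by ring
  · intro k k' hk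
    rw [sum_slater_mul_slater, slater_eq_zero_of_range_ne (hrange hk).symm, mul_zero]

theorem sum_slaterSum_cons_mul [Fintype ι] (c : K → ℝ) {e : K → Fin (M + 1) → ι}
    (he : ∀ k, Function.Injective (e k))
    (hdiff : Pairwise fun k k' => (Set.range (e k) \ Set.range (e k')).Nontrivial) (a b : ι) :
    ∑ j, slaterSum c e (Fin.cons a j) * slaterSum c e (Fin.cons b j) =
      if a = b then M.factorial * ∑ k, (if a ∈ Set.range (e k) then c k ^ 2 else 0) else 0 := by
  simp only [slaterSum]
  rw [sum_sum_mul_sum_of_orthogonal c (fun k j => slater (e k) (Fin.cons a j))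
    (fun k j => slater (e k) (Fin.cons b j))
    fun k k' hk => sum_slater_cons_mul_slater_cons_eq_zero (hdiff hk) a b]
  simp only [sum_slater_cons_mul_slater_cons_self (he _)]
  split_ifs with hab
  · rw [mul_sum]
    refine sum_congr rfl fun k _ => ?_
    split_ifs <;> simp_all [mul_comm]
  · simp [hab]

end Slater

namespace Coleman

open Slater

def orbitalPair (n : ℕ) (k : Fin (n + 1)) : Finset (Fin (2 * n + 3)) :=
  {⟨2 * k + 1, by omega⟩, ⟨2 * k + 2, by omega⟩}

variable {n : ℕ}

theorem mem_orbitalPair {k : Fin (n + 1)} {a : Fin (2 * n + 3)} :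
    a ∈ orbitalPair n k ↔ (a : ℕ) = 2 * k + 1 ∨ (a : ℕ) = 2 * k + 2 := by
  simp [orbitalPair, Fin.ext_iff]

theorem zero_notMem_orbitalPair (k : Fin (n + 1)) : 0 ∉ orbitalPair n k := by
  simp [mem_orbitalPair]

theorem exists_mem_orbitalPair {a : Fin (2 * n + 3)} (ha : a ≠ 0) : ∃ k, a ∈ orbitalPair n k := by
  have := a.2
  have : (a : ℕ) ≠ 0 := Fin.val_ne_iff.mpr ha
  exact ⟨⟨(a - 1) / 2, by omega⟩, mem_orbitalPair.mpr (by simp only; omega)⟩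

theorem eq_of_mem_orbitalPair {k k' : Fin (n + 1)} {a : Fin (2 * n + 3)}
    (h : a ∈ orbitalPair n k) (h' : a ∈ orbitalPair n k') : k = k' := by
  rw [mem_orbitalPair] at h h'
  exact Fin.ext (by omega)

theorem card_orbitalPair (k : Fin (n + 1)) : #(orbitalPair n k) = 2 :=
  card_pair (by simp [Fin.ext_iff])

theorem card_compl_orbitalPair (k : Fin (n + 1)) : #(orbitalPair n k)ᶜ = 2 * n + 1 := by
  rw [card_compl, Fintype.card_fin, card_orbitalPair]
  omega

theorem nontrivial_orbitalPair (k : Fin (n + 1)) :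
    (orbitalPair n k : Set (Fin (2 * n + 3))).Nontrivial := by
  rw [orbitalPair, coe_pair]
  exact Set.nontrivial_pair (by simp [Fin.ext_iff])

theorem sum_eq_add_sum_orbitalPair (g : Fin (2 * n + 3) → ℝ) :
    ∑ a, g a = g 0 + ∑ k, ∑ a ∈ orbitalPair n k, g a := by
  have huniv : (univ : Finset (Fin (2 * n + 3))) = insert 0 (univ.biUnion (orbitalPair n)) := by
    ext a
    rcases eq_or_ne a 0 with rfl | ha
    · simp
    · simp [ha, exists_mem_orbitalPair ha]
  rw [huniv, sum_insert, sum_biUnion]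
  · exact fun k _ k' _ hk => disjoint_left.mpr fun a ha ha' => hk (eq_of_mem_orbitalPair ha ha')
  · simpa using zero_notMem_orbitalPair

noncomputable def orbitalsExceptPair (n : ℕ) (k : Fin (n + 1)) :
    Fin (2 * n + 1) → Fin (2 * n + 3) :=
  (orbitalPair n k)ᶜ.orderEmbOfFin (card_compl_orbitalPair k)

theorem orbitalsExceptPair_injective (k : Fin (n + 1)) :
    Function.Injective (orbitalsExceptPair n k) :=
  (orderEmbOfFin _ _).injective

theorem range_orbitalsExceptPair (k : Fin (n + 1)) :
    Set.range (orbitalsExceptPair n k) = ↑(orbitalPair n k)ᶜ :=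
  range_orderEmbOfFin _ _

theorem pairwise_nontrivial_range_orbitalsExceptPair_sdiff :
    Pairwise fun k k' =>
      (Set.range (orbitalsExceptPair n k) \ Set.range (orbitalsExceptPair n k')).Nontrivial := by
  intro k k' hk
  refine (nontrivial_orbitalPair k').mono fun a ha => ?_
  simp only [range_orbitalsExceptPair, coe_compl, Set.mem_sdiff, Set.mem_compl_iff, mem_coe,
    not_not]
  exact ⟨fun ha' => hk (eq_of_mem_orbitalPair ha' ha), ha⟩

variable {lam : Fin (2 * n + 3) → ℝ} {w : Fin (n + 1) → ℝ}

theorem sum_eq_one_of_sum_occupations_eq (h0 : lam 0 = 1)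
    (hlam : ∀ k, ∀ a ∈ orbitalPair n k, lam a = 1 - w k) (hsum : ∑ a, lam a = 2 * n + 1) :
    ∑ k, w k = 1 := by
  have hpair : ∀ k, ∑ a ∈ orbitalPair n k, lam a = 2 * (1 - w k) := fun k => by
    rw [sum_congr rfl (hlam k), sum_const, card_orbitalPair, nsmul_eq_mul]
    norm_num
  rw [sum_eq_add_sum_orbitalPair, h0, sum_congr rfl fun k _ => hpair k, ← mul_sum, sum_sub_distrib,
    sum_const, card_univ, Fintype.card_fin, nsmul_eq_mul, mul_one] at hsum
  push_cast at hsum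
  linarith

theorem sum_ite_notMem_orbitalPair (h0 : lam 0 = 1)
    (hlam : ∀ k, ∀ a ∈ orbitalPair n k, lam a = 1 - w k) (hw : ∑ k, w k = 1) (a : Fin (2 * n + 3)) :
    ∑ k, (if a ∉ orbitalPair n k then w k else 0) = lam a := by
  rcases eq_or_ne a 0 with rfl | ha
  · simp [zero_notMem_orbitalPair, hw, h0]
  obtain ⟨j, hj⟩ := exists_mem_orbitalPair ha
  have hiff : ∀ k, a ∉ orbitalPair n k ↔ k ≠ j := fun k =>
    ⟨fun hk hkj => hk (hkj ▸ hj), fun hkj hk => hkj (eq_of_mem_orbitalPair hk hj)⟩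
  simp only [hiff]
  rw [← sum_filter, filter_ne', sum_erase_eq_sub (mem_univ j), hw, hlam j a hj]

theorem sum_slaterSum_orbitalsExceptPair_sq (hw0 : ∀ k, 0 ≤ w k) (hw : ∑ k, w k = 1) :
    ∑ f, slaterSum (fun k => √(w k)) (orbitalsExceptPair n) f ^ 2 = (2 * n + 1).factorial := by
  rw [sum_slaterSum_sq _ (fun k => orbitalsExceptPair_injective k)
    (pairwise_nontrivial_range_orbitalsExceptPair_sdiff.mono fun _ _ h hrange => by
      simp [hrange] at h)]
  simp [Real.sq_sqrt (hw0 _), hw]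

theorem sum_slaterSum_orbitalsExceptPair_cons_mul (hw0 : ∀ k, 0 ≤ w k) (hw : ∑ k, w k = 1)
    (h0 : lam 0 = 1) (hlam : ∀ k, ∀ a ∈ orbitalPair n k, lam a = 1 - w k) (a b : Fin (2 * n + 3)) :
    ∑ j, slaterSum (fun k => √(w k)) (orbitalsExceptPair n) (Fin.cons a j) *
        slaterSum (fun k => √(w k)) (orbitalsExceptPair n) (Fin.cons b j) =
      (2 * n).factorial * if a = b then lam a else 0 := by
  rw [sum_slaterSum_cons_mul _ (fun k => orbitalsExceptPair_injective k)
    pairwise_nontrivial_range_orbitalsExceptPair_sdiff]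
  simp only [range_orbitalsExceptPair, coe_compl, Set.mem_compl_iff, mem_coe, Real.sq_sqrt (hw0 _),
    sum_ite_notMem_orbitalPair h0 hlam hw]
  split_ifs <;> simp

end Coleman

open Slater Coleman

/-- **Coleman's theorem for odd `N` and rank `N + 2` (sufficiency).**
Let `N = 2n+1` (with `n ≥ 1`) and `R = N + 2`.  If `λ : Fin R → ℝ` is
non-increasing with `λ 0 = 1`, doubly degenerate nonnegative remaining
eigenvalues `λ (2k+1) = λ (2k+2) ≥ 0` for `k = 0, …, n`, and `∑ λ = N`, then the
diagonal matrix `diag (λ)` is the one-particle reduced density matrix of some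
alternating, normalized `N`-fermion wavefunction on `ℂ^R`. -/
theorem odd_N_rank_N_plus_two_sufficient
    (n : ℕ)
    (lam : Fin (2 * n + 3) → ℝ)
    (hmono : ∀ i j : Fin (2 * n + 3), i ≤ j → lam j ≤ lam i)
    (h0 : lam 0 = 1)
    (hpair : ∀ k : Fin (n + 1),
        lam ⟨2 * k.1 + 1, by have := k.2; omega⟩ = lam ⟨2 * k.1 + 2, by have := k.2; omega⟩)
    (hsum : ∑ k, lam k = (2 * n + 1 : ℝ)) :
    ∃ x : (Fin (2 * n + 1) → Fin (2 * n + 3)) → ℂ,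
      (∀ (σ : Equiv.Perm (Fin (2 * n + 1))) (f : Fin (2 * n + 1) → Fin (2 * n + 3)),
          x (f ∘ σ) = ((Equiv.Perm.sign σ : ℤ) : ℂ) * x f) ∧
      (∀ f, ¬ Function.Injective f → x f = 0) ∧
      (∑ f, ‖x f‖ ^ 2 = (Nat.factorial (2 * n + 1) : ℝ)) ∧
      (∀ a b, (1 / (Nat.factorial (2 * n) : ℂ)) *
          ∑ j : Fin (2 * n) → Fin (2 * n + 3),
            x (Matrix.vecCons a j) * (starRingEnd ℂ) (x (Matrix.vecCons b j))
        = Matrix.diagonal (fun i => (lam i : ℂ)) a b) := by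
  set w : Fin (n + 1) → ℝ := fun k => 1 - lam ⟨2 * k.1 + 1, by have := k.2; omega⟩
  have hlam : ∀ k, ∀ a ∈ orbitalPair n k, lam a = 1 - w k := by
    intro k a ha
    rcases mem_orbitalPair.mp ha with h | h <;> simp only [w, sub_sub_cancel]
    · exact congrArg lam (Fin.ext h)
    · exact (congrArg lam (Fin.ext h)).trans (hpair k).symm
  have hw0 : ∀ k, 0 ≤ w k := fun k => sub_nonneg.mpr (h0 ▸ hmono 0 _ (Fin.zero_le _))
  have hw : ∑ k, w k = 1 := sum_eq_one_of_sum_occupations_eq h0 hlam hsum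
  set ψ := slaterSum (fun k => √(w k)) (orbitalsExceptPair n)
  have hψ : ∀ (σ : Equiv.Perm (Fin (2 * n + 1))) f, ψ (f ∘ σ) = Equiv.Perm.sign σ * ψ f :=
    fun σ f => slaterSum_comp_perm _ _ f σ
  refine ⟨fun f => ψ f, fun σ f => ?_, fun f hf => ?_, ?_, fun a b => ?_⟩
  · simp only [hψ, Complex.ofReal_mul, Complex.ofReal_intCast]
  · simp only [eq_zero_of_not_injective_of_alternating hψ hf, Complex.ofReal_zero]
  · simp only [Complex.norm_real, Real.norm_eq_abs, sq_abs]
    exact sum_slaterSum_orbitalsExceptPair_sq hw0 hw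
  · have hγ : ∑ j, ψ (Fin.cons a j) * ψ (Fin.cons b j) =
        (2 * n).factorial * if a = b then lam a else 0 :=
      sum_slaterSum_orbitalsExceptPair_cons_mul hw0 hw h0 hlam a b
    simp only [Matrix.vecCons, Complex.conj_ofReal, ← Complex.ofReal_mul, ← Complex.ofReal_sum, hγ,
      Matrix.diagonal_apply]
    split_ifs <;> simp [Nat.factorial_ne_zero]
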